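/- Let T : Hol(𝔻) → Hol(𝔻) be a continuous linear operator isometric for two seminorms ‖·‖_{∞,r₁} and ‖·‖_{∞,r₂} with 0 < r₁ < r₂ < 1. Then T maps constant functions to constant functions of the same modulus: T𝟙 is a unimodular constant function. -/

import Mathlib

open Metric Complex Set

/-- The sup seminorm `‖f‖_{∞,r} = sup_{|z| ≤ r} |f(z)|`. -/
noncomputable def supNorm (r : ℝ) (f : ℂ → ℂ) : ℝ :=
  ⨆ z : Metric.closedBall (0:ℂ) r, ‖f (z : ℂ)‖

/-- `Hol(𝔻)`: the space of holomorphic functions on the open unit disc,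
as a submodule of `ℂ → ℂ`. -/
noncomputable def HolD : Submodule ℂ (ℂ → ℂ) where
  carrier := {f | DifferentiableOn ℂ f (Metric.ball 0 1)}
  add_mem' := fun hf hg => hf.add hg
  zero_mem' := differentiableOn_const 0
  smul_mem' := fun c _ hf => hf.const_smul c

/-! `T 𝟙` has sup norm `1` on both closed discs of radii `r₁ < r₂`. Its modulus thus attains on the
smaller disc the maximum it has on the larger one, at an interior point of the larger one, so by
the maximum modulus principle it is constant there, and by the identity theorem on all of `𝔻`. -/

theorem supNorm_const {r : ℝ} (hr : 0 ≤ r) (c : ℂ) : supNorm r (fun _ => c) = ‖c‖ := by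
  have : Nonempty (closedBall (0:ℂ) r) := ⟨⟨0, mem_closedBall_self hr⟩⟩
  exact ciSup_const

section ContinuousOnClosedBall

variable {r : ℝ} {g : ℂ → ℂ} (hg : ContinuousOn g (closedBall 0 r))
include hg

theorem norm_le_supNorm {z : ℂ} (hz : z ∈ closedBall 0 r) : ‖g z‖ ≤ supNorm r g := by
  have hbdd : BddAbove (range fun w : closedBall (0:ℂ) r => ‖g w‖) := by
    obtain ⟨C, hC⟩ := (isCompact_closedBall (0:ℂ) r).exists_bound_of_continuousOn hg
    exact ⟨C, by rintro _ ⟨w, rfl⟩; exact hC w w.2⟩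
  exact le_ciSup (f := fun w : closedBall (0:ℂ) r => ‖g w‖) hbdd ⟨z, hz⟩

theorem exists_norm_eq_supNorm (hr : 0 ≤ r) :
    ∃ z₀ ∈ closedBall (0:ℂ) r, ‖g z₀‖ = supNorm r g := by
  obtain ⟨z₀, hz₀, hmax⟩ := (isCompact_closedBall (0:ℂ) r).exists_isMaxOn
    ⟨0, mem_closedBall_self hr⟩ (continuous_norm.comp_continuousOn hg)
  refine ⟨z₀, hz₀, le_antisymm (norm_le_supNorm hg hz₀) ?_⟩
  have : Nonempty (closedBall (0:ℂ) r) := ⟨⟨z₀, hz₀⟩⟩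
  exact ciSup_le fun z => hmax z.2

end ContinuousOnClosedBall

theorem eqOn_ball_of_eqOn_ball_const {g : ℂ → ℂ} {r R : ℝ} {c : ℂ} (hr : 0 < r)
    (hg : DifferentiableOn ℂ g (ball 0 R)) (hgc : EqOn g (fun _ => c) (ball 0 r)) :
    EqOn g (fun _ => c) (ball 0 R) := by
  rcases le_or_gt R 0 with hR | hR
  · simp [ball_eq_empty.2 hR]
  exact (hg.analyticOnNhd isOpen_ball).eqOn_of_preconnected_of_eventuallyEq analyticOnNhd_const
    (convex_ball _ _).isPreconnected (mem_ball_self hR)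
    (Filter.eventuallyEq_of_mem (ball_mem_nhds 0 hr) hgc)

theorem exists_eqOn_const_of_supNorm_eq {g : ℂ → ℂ} {r₁ r₂ R : ℝ} (hr₁ : 0 ≤ r₁)
    (hr₁₂ : r₁ < r₂) (hr₂ : r₂ < R) (hg : DifferentiableOn ℂ g (ball 0 R))
    (hsup : supNorm r₁ g = supNorm r₂ g) :
    ∃ c : ℂ, ‖c‖ = supNorm r₁ g ∧ EqOn g (fun _ => c) (ball 0 R) := by
  have hgc₂ : ContinuousOn g (closedBall 0 r₂) :=
    hg.continuousOn.mono (closedBall_subset_ball hr₂)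
  obtain ⟨z₀, hz₀, hnorm⟩ := exists_norm_eq_supNorm
    (hgc₂.mono (closedBall_subset_closedBall hr₁₂.le)) hr₁
  have hmax : IsMaxOn (‖g ·‖) (ball 0 r₂) z₀ := fun z hz => by
    change ‖g z‖ ≤ ‖g z₀‖
    rw [hnorm, hsup]
    exact norm_le_supNorm hgc₂ (ball_subset_closedBall hz)
  have hconst : EqOn g (fun _ => g z₀) (ball 0 r₂) :=
    eqOn_of_isPreconnected_of_isMaxOn_norm (convex_ball _ _).isPreconnected isOpen_ball
      (hg.mono (ball_subset_ball hr₂.le)) (closedBall_subset_ball hr₁₂ hz₀) hmax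
  exact ⟨g z₀, hnorm, eqOn_ball_of_eqOn_ball_const (hr₁.trans_lt hr₁₂) hg hconst⟩

theorem image_of_one_is_unimodular_constant_general
    (r₁ r₂ : ℝ) (hr₁ : 0 < r₁) (hr₁₂ : r₁ < r₂) (hr₂ : r₂ < 1)
    (T : HolD →ₗ[ℂ] HolD)
    (hiso₁ : ∀ f : HolD, supNorm r₁ (T f).1 = supNorm r₁ f.1)
    (hiso₂ : ∀ f : HolD, supNorm r₂ (T f).1 = supNorm r₂ f.1) :
    ∃ α : ℂ, ‖α‖ = 1 ∧
      ∀ z ∈ Metric.ball (0:ℂ) 1,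
        (T ⟨fun _ => 1, differentiableOn_const 1⟩).1 z = α := by
  set one : HolD := ⟨fun _ => 1, differentiableOn_const 1⟩
  have hsup₁ : supNorm r₁ (T one).1 = 1 := by
    rw [hiso₁, supNorm_const hr₁.le, norm_one]
  have hsup₂ : supNorm r₂ (T one).1 = 1 := by
    rw [hiso₂, supNorm_const (hr₁.trans hr₁₂).le, norm_one]
  obtain ⟨α, hα, hconst⟩ := exists_eqOn_const_of_supNorm_eq hr₁.le hr₁₂ hr₂ (T one).2
    (hsup₁.trans hsup₂.symm)
  exact ⟨α, hα.trans hsup₁, hconst⟩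

/-- Step 1: a continuous linear operator on `Hol(𝔻)` isometric
for two seminorms `‖·‖_{∞,r₁}` and `‖·‖_{∞,r₂}` sends the constant function
`𝟙` to a unimodular constant function. -/
theorem image_of_one_is_unimodular_constant
    (r₁ r₂ : ℝ) (hr₁ : 0 < r₁) (hr₁₂ : r₁ < r₂) (hr₂ : r₂ < 1)
    (T : HolD →ₗ[ℂ] HolD)
    (hcont : ∀ r : ℝ, 0 < r → r < 1 → ∃ C s : ℝ, 0 < s ∧ s < 1 ∧ 0 ≤ C ∧
      ∀ f : HolD, supNorm r (T f).1 ≤ C * supNorm s f.1)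
    (hiso₁ : ∀ f : HolD, supNorm r₁ (T f).1 = supNorm r₁ f.1)
    (hiso₂ : ∀ f : HolD, supNorm r₂ (T f).1 = supNorm r₂ f.1) :
    ∃ α : ℂ, ‖α‖ = 1 ∧
      ∀ z ∈ Metric.ball (0:ℂ) 1,
        (T ⟨fun _ => 1, differentiableOn_const 1⟩).1 z = α :=
  image_of_one_is_unimodular_constant_general r₁ r₂ hr₁ hr₁₂ hr₂ T hiso₁ hiso₂
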